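/- Let Ω = B_R(0) be the open ball of radius R centered at the origin in ℝ^N and let ψ be a first eigenfunction of Ω. Then ψ is radially symmetric: ψ(x) = ψ(y) whenever x, y ∈ closure Ω satisfy |x| = |y|. -/

import Mathlib

/-!
For a linear isometry `O` preserving `Ω`, put `v = ψ ∘ O`. Since `O` preserves volume, surface
measure and gradient norms, `v` has the same Robin energy and `L^p` mass as `ψ`, so
`energy v = λ ∫ |v|^p`. Testing the weak equation of `ψ` with Picone's function
`w = v^p ψ^(1-p)` gives the same identity with `∫ ‖∇v‖^p` replaced by `∫ ‖∇ψ‖^(p-2) ⟪∇ψ, ∇w⟫`.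
By Picone's pointwise inequality (Young plus Cauchy–Schwarz) the second integrand is at most the
first, with equality only where `∇v = (v/ψ) ∇ψ`; hence `v/ψ` is constant, equal to `1` at the
fixed point `0`. On a ball, a hyperplane reflection maps any point to any other of the same norm.
-/

open MeasureTheory Set

noncomputable section

/-- Euclidean space `ℝ^N`. -/
abbrev Euc (N : ℕ) := EuclideanSpace ℝ (Fin N)

/-- The `(N-1)`-dimensional Hausdorff (surface) measure `σ` on `ℝ^N`. -/
def surf (N : ℕ) : Measure (Euc N) := Measure.hausdorffMeasure ((N : ℝ) - 1)

/-- The Robin energy `∫_Ω |∇u|^p dx + β ∫_{∂Ω} |u|^p dσ`. -/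
def energy (N : ℕ) (p β : ℝ) (Ω : Set (Euc N)) (u : Euc N → ℝ) : ℝ :=
  (∫ x in Ω, ‖gradient u x‖ ^ p) + β * ∫ x in frontier Ω, |u x| ^ p ∂(surf N)

/-- The first Robin eigenvalue of the `p`-Laplacian on `Ω`. -/
def lambda1 (N : ℕ) (p β : ℝ) (Ω : Set (Euc N)) : ℝ :=
  sInf {v | ∃ u : Euc N → ℝ, ContDiffOn ℝ 1 u (closure Ω) ∧
      (∫ x in Ω, |u x| ^ p) = 1 ∧ v = energy N p β Ω u}

/-- `Ω` has smooth boundary: it is the sublevel set of a smooth defining function whose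
gradient does not vanish on the boundary. -/
def HasSmoothBoundary (N : ℕ) (Ω : Set (Euc N)) : Prop :=
  ∃ f : Euc N → ℝ, ContDiff ℝ (⊤ : ℕ∞) f ∧ Ω = {x | f x < 0} ∧
    frontier Ω = {x | f x = 0} ∧ ∀ x ∈ frontier Ω, gradient f x ≠ 0

/-- `ψ ∈ C¹(closure Ω)` is a weak eigenfunction of the Robin `p`-Laplacian with
eigenvalue `lam`. -/
def IsWeakEigenfunction (N : ℕ) (p β : ℝ) (Ω : Set (Euc N)) (ψ : Euc N → ℝ) (lam : ℝ) : Prop :=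
  ContDiffOn ℝ 1 ψ (closure Ω) ∧
    ∀ φ : Euc N → ℝ, ContDiffOn ℝ 1 φ (closure Ω) →
      (∫ x in Ω, ‖gradient ψ x‖ ^ (p - 2) * (inner ℝ (gradient ψ x) (gradient φ x) : ℝ)) +
          β * ∫ x in frontier Ω, |ψ x| ^ (p - 2) * ψ x * φ x ∂(surf N) =
        lam * ∫ x in Ω, |ψ x| ^ (p - 2) * ψ x * φ x

/-- A first eigenfunction: a weak eigenfunction with eigenvalue `λ₁(Ω)`, positive on
`closure Ω` and with maximum value `1` there. -/
def IsFirstEigenfunction (N : ℕ) (p β : ℝ) (Ω : Set (Euc N)) (ψ : Euc N → ℝ) : Prop :=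
  IsWeakEigenfunction N p β Ω ψ (lambda1 N p β Ω) ∧
    (∀ x ∈ closure Ω, 0 < ψ x) ∧ IsGreatest (ψ '' closure Ω) 1

/-- The functional `H_Ω(U, φ)`. -/
def Hfun (N : ℕ) (p β : ℝ) (Ω U : Set (Euc N)) (φ : Euc N → ℝ) : ℝ :=
  (volume U).toReal⁻¹ *
    ((∫ x in frontier U ∩ Ω, φ x ∂(surf N)) + β * (surf N (frontier U ∩ frontier Ω)).toReal -
      (p - 1) * ∫ x in U, φ x ^ (p / (p - 1)))

/-- The class `M_β`: continuous nonnegative functions on `Ω` with `limsup_{x→z} φ(x) ≤ β`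
for every boundary point `z`. -/
def Mbeta (N : ℕ) (β : ℝ) (Ω : Set (Euc N)) (φ : Euc N → ℝ) : Prop :=
  ContinuousOn φ Ω ∧ (∀ x ∈ Ω, 0 ≤ φ x) ∧
    ∀ z ∈ frontier Ω, Filter.limsup φ (nhdsWithin z Ω) ≤ β

open Real InnerProductSpace
open scoped Gradient

section Young

variable {p A B : ℝ}

theorem mul_rpow_sub_one_mul_lt (hp : 1 < p) (hA : 0 ≤ A) (hB : 0 ≤ B) (hAB : A ≠ B) :
    p * (A ^ (p - 1) * B) < (p - 1) * A ^ p + B ^ p := by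
  rcases hA.eq_or_lt with rfl | hA
  · have hB : 0 < B := lt_of_le_of_ne hB hAB
    simp [zero_rpow (by linarith : p - 1 ≠ 0), zero_rpow (by linarith : p ≠ 0), rpow_pos_of_pos hB]
  · have bernoulli := one_add_mul_self_lt_rpow_one_add (s := B / A - 1)
      (by linarith [div_nonneg hB hA.le])
      (by rwa [sub_ne_zero, ne_eq, div_eq_one_iff_eq hA.ne', eq_comm]) hp
    rw [add_sub_cancel, div_rpow hB hA.le, lt_div_iff₀ (rpow_pos_of_pos hA p)] at bernoulli
    have hAp : A ^ p = A ^ (p - 1) * A := by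
      rw [← rpow_add_one hA.ne']; ring_nf
    calc p * (A ^ (p - 1) * B) = (1 + p * (B / A - 1)) * A ^ p + (p - 1) * A ^ p := by
          rw [hAp]; field_simp; ring
      _ < B ^ p + (p - 1) * A ^ p := by gcongr
      _ = _ := add_comm _ _

theorem mul_rpow_sub_one_mul_le (hp : 1 < p) (hA : 0 ≤ A) (hB : 0 ≤ B) :
    p * (A ^ (p - 1) * B) ≤ (p - 1) * A ^ p + B ^ p := by
  rcases eq_or_ne A B with rfl | hAB
  · have hAp : A ^ (p - 1) * A = A ^ p := by
      rw [← rpow_add_one' hA (by linarith), sub_add_cancel]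
    rw [hAp]; linarith
  · exact (mul_rpow_sub_one_mul_lt hp hA hB hAB).le

end Young

section Picone

variable {F : Type*} [NormedAddCommGroup F] [InnerProductSpace ℝ F] {p τ : ℝ}

theorem norm_rpow_sub_two_mul_inner_self (hp : p ≠ 0) (a : F) :
    ‖a‖ ^ (p - 2) * ⟪a, a⟫_ℝ = ‖a‖ ^ p := by
  rcases eq_or_ne a 0 with rfl | ha
  · simp [zero_rpow hp]
  · rw [real_inner_self_eq_norm_sq, ← rpow_natCast, ← rpow_add (norm_pos_iff.mpr ha)]
    norm_num

theorem abs_rpow_sub_two_mul_self_mul_self (hp : p ≠ 0) (t : ℝ) :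
    |t| ^ (p - 2) * t * t = |t| ^ p := by
  simpa [mul_assoc, sq] using norm_rpow_sub_two_mul_inner_self (F := ℝ) hp t

theorem abs_rpow_sub_two_mul_self_mul_rpow_mul_rpow_one_sub {s t : ℝ} (ht : 0 < t) (hs : 0 < s) :
    |t| ^ (p - 2) * t * (s ^ p * t ^ (1 - p)) = |s| ^ p := by
  rw [abs_of_pos ht, abs_of_pos hs, mul_comm (s ^ p), ← mul_assoc,
    mul_assoc (t ^ (p - 2)), mul_comm t, ← rpow_add_one ht.ne', ← rpow_add ht,
    show p - 2 + (1 - p + 1) = 0 by ring, rpow_zero, one_mul]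

theorem picone_eq_young_sub (hp : 1 < p) (hτ : 0 ≤ τ) (a b : F) :
    ‖a‖ ^ (p - 2) * ⟪a, (p * τ ^ (p - 1)) • b - ((p - 1) * τ ^ p) • a⟫_ℝ =
      p * ((τ * ‖a‖) ^ (p - 1) * ‖b‖) - (p - 1) * (τ * ‖a‖) ^ p -
        p * τ ^ (p - 1) * ‖a‖ ^ (p - 2) * (‖a‖ * ‖b‖ - ⟪a, b⟫_ℝ) := by
  have hpow : ‖a‖ ^ (p - 1) = ‖a‖ ^ (p - 2) * ‖a‖ := by
    rw [← rpow_add_one' (norm_nonneg a) (by linarith)]; ring_nf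
  rw [inner_sub_right, real_inner_smul_right, real_inner_smul_right, mul_rpow hτ (norm_nonneg a),
    mul_rpow hτ (norm_nonneg a), ← norm_rpow_sub_two_mul_inner_self (by linarith : p ≠ 0) a, hpow]
  ring

theorem picone_le (hp : 1 < p) (hτ : 0 ≤ τ) (a b : F) :
    ‖a‖ ^ (p - 2) * ⟪a, (p * τ ^ (p - 1)) • b - ((p - 1) * τ ^ p) • a⟫_ℝ ≤ ‖b‖ ^ p := by
  have hcs : 0 ≤ p * τ ^ (p - 1) * ‖a‖ ^ (p - 2) * (‖a‖ * ‖b‖ - ⟪a, b⟫_ℝ) := by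
    have := sub_nonneg.mpr (real_inner_le_norm a b)
    positivity
  rw [picone_eq_young_sub hp hτ]
  linarith [mul_rpow_sub_one_mul_le hp (by positivity : 0 ≤ τ * ‖a‖) (norm_nonneg b)]

theorem picone_lt (hp : 1 < p) (hτ : 0 < τ) {a b : F} (hb : b ≠ τ • a) :
    ‖a‖ ^ (p - 2) * ⟪a, (p * τ ^ (p - 1)) • b - ((p - 1) * τ ^ p) • a⟫_ℝ < ‖b‖ ^ p := by
  rw [picone_eq_young_sub hp hτ.le]
  have hp0 : 0 < p := by linarith
  by_cases hnorm : τ * ‖a‖ = ‖b‖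
  · have ha : a ≠ 0 := by
      rintro rfl
      simp only [norm_zero, mul_zero, smul_zero] at hnorm hb
      exact hb (norm_eq_zero.mp hnorm.symm)
    have hcs : ⟪a, b⟫_ℝ < ‖a‖ * ‖b‖ := by
      refine lt_of_le_of_ne (real_inner_le_norm a b) fun h => hb ?_
      rw [inner_eq_norm_mul_iff_real, ← hnorm, mul_comm, ← smul_smul] at h
      exact (smul_right_injective F (norm_ne_zero_iff.mpr ha) h).symm
    have := sub_pos.mpr hcs
    have := norm_pos_iff.mpr ha
    have : 0 < p * τ ^ (p - 1) * ‖a‖ ^ (p - 2) * (‖a‖ * ‖b‖ - ⟪a, b⟫_ℝ) := by positivity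
    linarith [mul_rpow_sub_one_mul_le hp (by positivity : 0 ≤ τ * ‖a‖) (norm_nonneg b)]
  · have hcs : 0 ≤ p * τ ^ (p - 1) * ‖a‖ ^ (p - 2) * (‖a‖ * ‖b‖ - ⟪a, b⟫_ℝ) := by
      have := sub_nonneg.mpr (real_inner_le_norm a b)
      positivity
    linarith [mul_rpow_sub_one_mul_lt hp (by positivity : 0 ≤ τ * ‖a‖) (norm_nonneg b) hnorm]

-- `‖a‖ ^ (p - 2) • a` is `p⁻¹` times the gradient of the `C¹` function `‖·‖ ^ p`, hence
-- continuous also at `0` when `p < 2`.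
theorem continuous_norm_rpow_sub_two_mul_inner (hp : 1 < p) :
    Continuous fun q : F × F => ‖q.1‖ ^ (p - 2) * ⟪q.1, q.2⟫_ℝ := by
  have h := (contDiff_norm_rpow (E := F) hp).continuous_fderiv one_ne_zero
  simp_rw [funext fun x => fderiv_norm_rpow (E := F) x hp] at h
  convert ((h.comp continuous_fst).clm_apply continuous_snd).const_mul p⁻¹ using 2 with q
  simp only [Function.comp_apply, smul_apply, innerSL_apply_apply, smul_eq_mul]
  field_simp

end Picone

section Gradient

variable {E : Type*} [NormedAddCommGroup E] [InnerProductSpace ℝ E] [CompleteSpace E]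

theorem gradient_comp_linearIsometryEquiv (u : E → ℝ) (O : E ≃ₗᵢ[ℝ] E) (x : E) :
    ∇ (u ∘ O) x = O.symm (∇ u (O x)) := by
  apply (toDual ℝ E).injective
  ext h
  rw [toDual_gradient, toDual_apply_apply, ← O.inner_map_map, O.apply_symm_apply,
    inner_gradient_left]
  exact congrArg (· h) (O.toContinuousLinearEquiv.comp_right_fderiv (f := u) (x := x))

theorem HasGradientAt.rpow_mul_rpow_one_sub {p : ℝ} {u v : E → ℝ} {a b x : E}
    (hu : HasGradientAt u a x) (hv : HasGradientAt v b x) (hux : 0 < u x) (hvx : 0 < v x) :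
    HasGradientAt (fun y => v y ^ p * u y ^ (1 - p))
      ((p * (v x / u x) ^ (p - 1)) • b - ((p - 1) * (v x / u x) ^ p) • a) x := by
  rw [hasGradientAt_iff_hasFDerivAt] at hu hv ⊢
  refine ((hv.rpow_const (p := p) (.inl hvx.ne')).mul
    (hu.rpow_const (p := 1 - p) (.inl hux.ne'))).congr_fderiv ?_
  have h1 : u x ^ (1 - p) * (p * v x ^ (p - 1)) = p * (v x / u x) ^ (p - 1) := by
    rw [div_rpow hvx.le hux.le, show 1 - p = -(p - 1) by ring, rpow_neg hux.le]; ring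
  have h2 : v x ^ p * ((1 - p) * u x ^ (1 - p - 1)) = -((p - 1) * (v x / u x) ^ p) := by
    rw [div_rpow hvx.le hux.le, show 1 - p - 1 = -p by ring, rpow_neg hux.le]; ring
  rw [map_sub, map_smul, map_smul, smul_smul, smul_smul, h1, h2, neg_smul]
  abel

end Gradient

theorem MeasureTheory.MeasurePreserving.setIntegral_comp_of_preimage_eq {α : Type*}
    [MeasurableSpace α] {μ : Measure α} {f : α → α} (hf : MeasurePreserving f μ μ)
    (he : MeasurableEmbedding f) {s : Set α} (hs : f ⁻¹' s = s) (g : α → ℝ) :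
    ∫ x in s, g (f x) ∂μ = ∫ x in s, g x ∂μ := by
  conv_lhs => rw [← hs]
  exact hf.setIntegral_preimage_emb he g s

theorem IsOpen.integrableOn_of_contDiffOn_closure {E : Type*} [NormedAddCommGroup E]
    [InnerProductSpace ℝ E] [CompleteSpace E] [MeasurableSpace E] [BorelSpace E]
    {μ : Measure E} [IsFiniteMeasureOnCompacts μ] {Ω : Set E} {u v : E → ℝ} {H : E → E → ℝ}
    (hΩ : IsOpen Ω) (hK : IsCompact (closure Ω)) (hud : UniqueDiffOn ℝ (closure Ω))
    (hH : Continuous (Function.uncurry H)) (hu : ContDiffOn ℝ 1 u (closure Ω))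
    (hv : ContDiffOn ℝ 1 v (closure Ω)) :
    IntegrableOn (fun x => H (∇ u x) (∇ v x)) Ω μ := by
  have hcont : ∀ {f : E → ℝ}, ContDiffOn ℝ 1 f (closure Ω) →
      ContinuousOn (fun x => (toDual ℝ E).symm (fderivWithin ℝ f (closure Ω) x)) (closure Ω) :=
    fun hf => (toDual ℝ E).symm.continuous.comp_continuousOn
      (hf.continuousOn_fderivWithin hud le_rfl)
  have hgrad : ∀ f : E → ℝ, ∀ x ∈ Ω,
      (toDual ℝ E).symm (fderivWithin ℝ f (closure Ω) x) = ∇ f x := fun f x hx => by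
    rw [fderivWithin_of_mem_nhds (Filter.mem_of_superset (hΩ.mem_nhds hx) subset_closure)]; rfl
  refine (((hH.comp_continuousOn ((hcont hu).prodMk (hcont hv))).integrableOn_compact
    hK).mono_set subset_closure).congr_fun (fun x hx => ?_) hΩ.measurableSet
  simp only [Function.comp_apply, Function.uncurry_apply_pair, hgrad u x hx, hgrad v x hx]

section PiconeIdentity

variable {E : Type*} [NormedAddCommGroup E] [InnerProductSpace ℝ E] [CompleteSpace E]
  [MeasurableSpace E] [BorelSpace E] {μ : Measure E} [μ.IsOpenPosMeasure]
  {p : ℝ} {Ω : Set E} {u v : E → ℝ}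

theorem IsOpen.exists_eqOn_const_mul_of_integral_picone_eq (hΩ : IsOpen Ω)
    (hΩc : IsPreconnected Ω) (hp : 1 < p) (hu : ContDiffOn ℝ 1 u Ω) (hv : ContDiffOn ℝ 1 v Ω)
    (hu0 : ∀ x ∈ Ω, 0 < u x) (hv0 : ∀ x ∈ Ω, 0 < v x)
    (hpic : IntegrableOn
      (fun x => ‖∇ u x‖ ^ (p - 2) * ⟪∇ u x, ∇ (fun y => v y ^ p * u y ^ (1 - p)) x⟫_ℝ) Ω μ)
    (hgv : IntegrableOn (fun x => ‖∇ v x‖ ^ p) Ω μ)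
    (heq : ∫ x in Ω, ‖∇ u x‖ ^ (p - 2) * ⟪∇ u x, ∇ (fun y => v y ^ p * u y ^ (1 - p)) x⟫_ℝ ∂μ =
      ∫ x in Ω, ‖∇ v x‖ ^ p ∂μ) :
    ∃ c, ∀ x ∈ Ω, v x = c * u x := by
  have hud := hu.differentiableOn one_ne_zero
  have hvd := hv.differentiableOn one_ne_zero
  have hτ : ∀ x ∈ Ω, 0 < v x / u x := fun x hx => div_pos (hv0 x hx) (hu0 x hx)
  have hgradw : ∀ x ∈ Ω, ∇ (fun y => v y ^ p * u y ^ (1 - p)) x =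
      (p * (v x / u x) ^ (p - 1)) • ∇ v x - ((p - 1) * (v x / u x) ^ p) • ∇ u x :=
    fun x hx => ((hud.differentiableAt (hΩ.mem_nhds hx)).hasGradientAt.rpow_mul_rpow_one_sub
      (hvd.differentiableAt (hΩ.mem_nhds hx)).hasGradientAt (hu0 x hx) (hv0 x hx)).gradient
  have hae : ∀ᵐ x ∂μ.restrict Ω, ∇ v x = (v x / u x) • ∇ u x := by
    have hle : ∀ x ∈ Ω, ‖∇ u x‖ ^ (p - 2) *
        ⟪∇ u x, ∇ (fun y => v y ^ p * u y ^ (1 - p)) x⟫_ℝ ≤ ‖∇ v x‖ ^ p := fun x hx => by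
      rw [hgradw x hx]; exact picone_le hp (hτ x hx).le _ _
    filter_upwards [(integral_eq_iff_of_ae_le hpic hgv
      (ae_restrict_of_forall_mem hΩ.measurableSet hle)).mp heq,
      ae_restrict_mem hΩ.measurableSet] with x hx hxΩ
    by_contra hne
    rw [hgradw x hxΩ] at hx
    exact (picone_lt hp (hτ x hxΩ) hne).ne hx
  have hgrad_cont : ∀ {f : E → ℝ}, ContDiffOn ℝ 1 f Ω → ContinuousOn (∇ f) Ω := fun hf =>
    (toDual ℝ E).symm.continuous.comp_continuousOn (hf.continuousOn_fderiv_of_isOpen hΩ le_rfl)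
  have hgrad_eq : EqOn (∇ v) (fun x => (v x / u x) • ∇ u x) Ω :=
    Measure.eqOn_open_of_ae_eq hae hΩ (hgrad_cont hv) (((hv.continuousOn.div hu.continuousOn)
      fun x hx => (hu0 x hx).ne').smul (hgrad_cont hu))
  obtain ⟨a, ha⟩ := hΩ.exists_eq_add_of_fderiv_eq hΩc
    (hvd.log fun x hx => (hv0 x hx).ne') (hud.log fun x hx => (hu0 x hx).ne') fun x hx => by
      have hux := (hu0 x hx).ne'
      have hvx := (hv0 x hx).ne'
      rw [((hvd.differentiableAt (hΩ.mem_nhds hx)).hasFDerivAt.log hvx).fderiv,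
        ((hud.differentiableAt (hΩ.mem_nhds hx)).hasFDerivAt.log hux).fderiv,
        ← toDual_gradient, ← toDual_gradient, hgrad_eq hx, map_smul, smul_smul]
      field_simp
  refine ⟨exp a, fun x hx => ?_⟩
  rw [← exp_log (hv0 x hx), show log (v x) = log (u x) + a from ha hx, exp_add,
    exp_log (hu0 x hx), mul_comm]

end PiconeIdentity

section Robin

variable {N : ℕ} {p β lam : ℝ} {Ω : Set (Euc N)} {ψ : Euc N → ℝ}

theorem IsWeakEigenfunction.energy_eq (hp : p ≠ 0) (hψ : IsWeakEigenfunction N p β Ω ψ lam) :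
    energy N p β Ω ψ = lam * ∫ x in Ω, |ψ x| ^ p := by
  simpa only [energy, norm_rpow_sub_two_mul_inner_self hp,
    abs_rpow_sub_two_mul_self_mul_self hp] using hψ.2 ψ hψ.1

theorem energy_comp_linearIsometryEquiv (O : Euc N ≃ₗᵢ[ℝ] Euc N) (hO : O ⁻¹' Ω = Ω)
    (u : Euc N → ℝ) : energy N p β Ω (u ∘ O) = energy N p β Ω u := by
  have hfr : O ⁻¹' frontier Ω = frontier Ω := by
    rw [← O.coe_toHomeomorph, O.toHomeomorph.preimage_frontier, O.coe_toHomeomorph, hO]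
  have he := O.toHomeomorph.measurableEmbedding
  have hsurf : MeasurePreserving O (surf N) (surf N) :=
    IsometryEquiv.measurePreserving_hausdorffMeasure O.toIsometryEquiv _
  simp only [energy, gradient_comp_linearIsometryEquiv, LinearIsometryEquiv.norm_map,
    Function.comp_apply]
  rw [O.measurePreserving.setIntegral_comp_of_preimage_eq he hO (fun x => ‖∇ u x‖ ^ p),
    hsurf.setIntegral_comp_of_preimage_eq he hfr (fun x => |u x| ^ p)]

theorem IsWeakEigenfunction.integral_picone_eq {v : Euc N → ℝ} (hΩ : MeasurableSet Ω)
    (hψ : IsWeakEigenfunction N p β Ω ψ lam) (hpos : ∀ x ∈ closure Ω, 0 < ψ x)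
    (hv : ContDiffOn ℝ 1 v (closure Ω)) (hvpos : ∀ x ∈ closure Ω, 0 < v x)
    (hv_energy : energy N p β Ω v = lam * ∫ x in Ω, |v x| ^ p) :
    ∫ x in Ω, ‖∇ ψ x‖ ^ (p - 2) * ⟪∇ ψ x, ∇ (fun y => v y ^ p * ψ y ^ (1 - p)) x⟫_ℝ =
      ∫ x in Ω, ‖∇ v x‖ ^ p := by
  have hvw : ∀ x ∈ closure Ω, |ψ x| ^ (p - 2) * ψ x * (v x ^ p * ψ x ^ (1 - p)) = |v x| ^ p :=
    fun x hx => abs_rpow_sub_two_mul_self_mul_rpow_mul_rpow_one_sub (hpos x hx) (hvpos x hx)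
  have hw_test := hψ.2 (fun y => v y ^ p * ψ y ^ (1 - p))
    ((hv.rpow_const_of_ne fun x hx => (hvpos x hx).ne').mul
      (hψ.1.rpow_const_of_ne fun x hx => (hpos x hx).ne'))
  rw [setIntegral_congr_fun isClosed_frontier.measurableSet
      fun x hx => hvw x (frontier_subset_closure hx),
    setIntegral_congr_fun hΩ fun x hx => hvw x (subset_closure hx)] at hw_test
  unfold energy at hv_energy
  linarith

theorem IsWeakEigenfunction.eqOn_comp_linearIsometryEquiv (hp : 1 < p) (hΩ : IsOpen Ω)
    (hΩconv : Convex ℝ Ω) (hΩb : Bornology.IsBounded Ω) (h0 : 0 ∈ Ω)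
    (hψ : IsWeakEigenfunction N p β Ω ψ lam) (hpos : ∀ x ∈ closure Ω, 0 < ψ x)
    (O : Euc N ≃ₗᵢ[ℝ] Euc N) (hO : O ⁻¹' Ω = Ω) :
    EqOn (ψ ∘ O) ψ (closure Ω) := by
  set v := ψ ∘ O
  have hOcl : MapsTo O (closure Ω) (closure Ω) := fun x hx => by
    rwa [← hO, ← O.coe_toHomeomorph, ← O.toHomeomorph.preimage_closure] at hx
  have hvpos : ∀ x ∈ closure Ω, 0 < v x := fun x hx => hpos _ (hOcl hx)
  have hv : ContDiffOn ℝ 1 v (closure Ω) := hψ.1.comp O.contDiff.contDiffOn hOcl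
  have hv_energy : energy N p β Ω v = lam * ∫ x in Ω, |v x| ^ p := by
    change energy N p β Ω (ψ ∘ O) = lam * ∫ x in Ω, |ψ (O x)| ^ p
    rw [energy_comp_linearIsometryEquiv O hO, O.measurePreserving.setIntegral_comp_of_preimage_eq
      O.toHomeomorph.measurableEmbedding hO (fun x => |ψ x| ^ p)]
    exact hψ.energy_eq (by linarith : (0 : ℝ) < p).ne'
  have hK : IsCompact (closure Ω) := hΩb.isCompact_closure
  have hud : UniqueDiffOn ℝ (closure Ω) :=
    uniqueDiffOn_convex hΩconv.closure ⟨0, (hΩ.subset_interior_iff.mpr subset_closure) h0⟩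
  obtain ⟨c, hc⟩ := hΩ.exists_eqOn_const_mul_of_integral_picone_eq
    hΩconv.isPreconnected hp (hψ.1.mono subset_closure) (hv.mono subset_closure)
    (fun x hx => hpos x (subset_closure hx)) (fun x hx => hvpos x (subset_closure hx))
    (hΩ.integrableOn_of_contDiffOn_closure (H := fun a b => ‖a‖ ^ (p - 2) * ⟪a, b⟫_ℝ) hK hud
      (continuous_norm_rpow_sub_two_mul_inner hp) hψ.1
      ((hv.rpow_const_of_ne fun x hx => (hvpos x hx).ne').mul
        (hψ.1.rpow_const_of_ne fun x hx => (hpos x hx).ne')))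
    (hΩ.integrableOn_of_contDiffOn_closure (H := fun _ b => ‖b‖ ^ p) (u := ψ) hK hud
      (continuous_snd.norm.rpow_const fun _ => .inr (by linarith)) hψ.1 hv)
    (hψ.integral_picone_eq hΩ.measurableSet hpos hv hvpos hv_energy)
  have hc1 : c = 1 := by
    have h := hc 0 h0
    simp only [v, Function.comp_apply, map_zero] at h
    have := (hpos 0 (subset_closure h0)).ne'
    field_simp at h
    linarith
  refine EqOn.of_subset_closure (fun x hx => ?_) hv.continuousOn hψ.1.continuousOn subset_closure
    subset_rfl
  rw [hc x hx, hc1, one_mul]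

end Robin

theorem first_eigenfunction_radial_general (N : ℕ) (p β : ℝ) (hp : 1 < p)
    (R : ℝ) (hR : 0 < R) (ψ : Euc N → ℝ)
    (hψ : IsFirstEigenfunction N p β (Metric.ball (0 : Euc N) R) ψ) :
    ∀ x ∈ closure (Metric.ball (0 : Euc N) R), ∀ y ∈ closure (Metric.ball (0 : Euc N) R),
      ‖x‖ = ‖y‖ → ψ x = ψ y := by
  intro x hx y _ hxy
  set O := Submodule.reflection (ℝ ∙ (x - y))ᗮ
  have hO : O ⁻¹' Metric.ball 0 R = Metric.ball 0 R := by
    ext z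
    simp
  have h := hψ.1.eqOn_comp_linearIsometryEquiv hp Metric.isOpen_ball (convex_ball 0 R)
    Metric.isBounded_ball (Metric.mem_ball_self hR) hψ.2.1 O hO hx
  rwa [Function.comp_apply, Submodule.reflection_sub hxy, eq_comm] at h

/-- On a ball centered at the origin, the first eigenfunction is radially symmetric. -/
theorem first_eigenfunction_radial (N : ℕ) (hN : 2 ≤ N) (p β : ℝ) (hp : 1 < p) (hβ : 0 < β)
    (R : ℝ) (hR : 0 < R) (ψ : Euc N → ℝ)
    (hψ : IsFirstEigenfunction N p β (Metric.ball (0 : Euc N) R) ψ) :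
    ∀ x ∈ closure (Metric.ball (0 : Euc N) R), ∀ y ∈ closure (Metric.ball (0 : Euc N) R),
      ‖x‖ = ‖y‖ → ψ x = ψ y :=
  first_eigenfunction_radial_general N p β hp R hR ψ hψ
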